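/- Assume the pencil (M,N) is self-adjoint with respect to P. Let x ∈ ℂ^n with Nx ≠ 0 and Mx ≠ rq_{M,N}(x)·Nx (x is not an eigenvector). Then rq_{M,N}(x) is real, qf_x(μ) is real for every real μ ≠ rq_{M,N}(x), the restriction of qf_x to ℝ is strictly increasing on (−∞, rq_{M,N}(x)) and on (rq_{M,N}(x), ∞), and one has the one-sided limits lim_{μ→rq_{M,N}(x)⁻} qf_x(μ) = rq_{M,N}(x) + r₀(x), lim_{μ→rq_{M,N}(x)⁺} qf_x(μ) = rq_{M,N}(x) − r₀(x), and lim_{μ→+∞} qf_x(μ) = lim_{μ→−∞} qf_x(μ) = rq_{M,N}(x). -/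

import Mathlib

open Matrix Filter Topology
open scoped ComplexOrder

noncomputable def innerP {n : ℕ} (P : Matrix (Fin n) (Fin n) ℂ) (x y : Fin n → ℂ) : ℂ :=
  star y ⬝ᵥ P.mulVec x

noncomputable def normP {n : ℕ} (P : Matrix (Fin n) (Fin n) ℂ) (x : Fin n → ℂ) : ℝ :=
  Real.sqrt (innerP P x x).re

noncomputable def rq {n : ℕ} (M N P : Matrix (Fin n) (Fin n) ℂ) (x : Fin n → ℂ) : ℂ :=
  innerP P (M.mulVec x) (N.mulVec x) / innerP P (N.mulVec x) (N.mulVec x)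

noncomputable def r0 {n : ℕ} (M N P : Matrix (Fin n) (Fin n) ℂ) (x : Fin n → ℂ) : ℝ :=
  normP P (M.mulVec x - rq M N P x • N.mulVec x) / normP P (N.mulVec x)

noncomputable def qf {n : ℕ} (M N P : Matrix (Fin n) (Fin n) ℂ) (x : Fin n → ℂ) (μ : ℂ) : ℂ :=
  (innerP P ((M - μ • N).mulVec x) (N.mulVec x) /
      (‖innerP P ((M - μ • N).mulVec x) (N.mulVec x)‖ : ℂ)) *
    ((normP P ((M - μ • N).mulVec x) / normP P (N.mulVec x) : ℝ) : ℂ) + μ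

def genSpec {n : ℕ} (M N : Matrix (Fin n) (Fin n) ℂ) : Set ℂ :=
  {l : ℂ | (M - l • N).det = 0}

/-! The residual `y = Mx - rq(x)·Nx` is `P`-orthogonal to `Nx`, and
`(M - μN)x = y + (rq(x) - μ)·Nx`. Hence `c = (rq(x) - μ)‖Nx‖²` and, by Pythagoras,
`‖(M - μN)x‖ / ‖Nx‖ = √(r₀² + |rq(x) - μ|²)`. When the pencil is self-adjoint `rq(x)` is real,
so for real `μ` on either side of `rq(x)`, `qf_x(μ) = rq(x) ± (√(r₀² + t²) - t)` with
`t = |rq(x) - μ|`; and `t ↦ √(r₀² + t²) - t` decreases strictly from `r₀` at `t = 0` to `0` at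
infinity. -/

lemma strictAnti_sqrt_add_sq_sub {R : ℝ} (hR : 0 < R) :
    StrictAnti fun t : ℝ => √(R + t ^ 2) - t := by
  intro s t hst
  have hs : s < √(R + s ^ 2) :=
    (le_abs_self s).trans_lt (Real.lt_sqrt_of_sq_lt (by rw [sq_abs]; linarith))
  suffices √(R + t ^ 2) < √(R + s ^ 2) + (t - s) by linarith
  rw [Real.sqrt_lt' (add_pos_of_nonneg_of_pos (Real.sqrt_nonneg _) (sub_pos.2 hst))]
  nlinarith [Real.sq_sqrt (by positivity : 0 ≤ R + s ^ 2)]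

-- `√(R + t²) - t = R / (√(R + t²) + t)`, and the denominator tends to `+∞`.
lemma tendsto_sqrt_add_sq_sub_atTop {R : ℝ} (hR : 0 ≤ R) :
    Tendsto (fun t : ℝ => √(R + t ^ 2) - t) atTop (𝓝 0) := by
  have hden : Tendsto (fun t : ℝ => √(R + t ^ 2) + t) atTop atTop :=
    tendsto_atTop_mono (fun t => le_add_of_nonneg_left (Real.sqrt_nonneg _)) tendsto_id
  refine ((tendsto_const_nhds (x := R)).div_atTop hden).congr' ?_
  filter_upwards [eventually_gt_atTop 0] with t ht
  have hsq := Real.sq_sqrt (by positivity : 0 ≤ R + t ^ 2)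
  rw [div_eq_iff (by positivity)]
  linear_combination -hsq

section RealQf

-- `qf` on the real line, with `ρ = rq M N P x` and `r = r0 M N P x` (see `qf_ofReal`).
noncomputable def realQf (ρ r μ : ℝ) : ℝ :=
  μ + (ρ - μ) / |ρ - μ| * √(r ^ 2 + (ρ - μ) ^ 2)

variable {ρ r μ : ℝ}

lemma realQf_of_lt (h : μ < ρ) : realQf ρ r μ = ρ + (√(r ^ 2 + (ρ - μ) ^ 2) - (ρ - μ)) := by
  rw [realQf, abs_of_pos (sub_pos.2 h), div_self (sub_pos.2 h).ne']
  ring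

lemma realQf_of_gt (h : ρ < μ) : realQf ρ r μ = ρ - (√(r ^ 2 + (μ - ρ) ^ 2) - (μ - ρ)) := by
  rw [realQf, abs_of_neg (sub_neg.2 h), neg_sub, ← neg_sub μ ρ, neg_div, div_self (sub_pos.2 h).ne',
    neg_sq]
  ring

lemma strictMonoOn_realQf_Iio (hr : r ≠ 0) : StrictMonoOn (realQf ρ r) (Set.Iio ρ) := by
  intro μ hμ ν hν hμν
  rw [realQf_of_lt hμ, realQf_of_lt hν, add_lt_add_iff_left]
  exact strictAnti_sqrt_add_sq_sub (by positivity) (by linarith)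

lemma strictMonoOn_realQf_Ioi (hr : r ≠ 0) : StrictMonoOn (realQf ρ r) (Set.Ioi ρ) := by
  intro μ hμ ν hν hμν
  rw [realQf_of_gt hμ, realQf_of_gt hν, sub_lt_sub_iff_left]
  exact strictAnti_sqrt_add_sq_sub (by positivity) (by linarith)

lemma tendsto_realQf_nhdsLT (hr : 0 ≤ r) : Tendsto (realQf ρ r) (𝓝[<] ρ) (𝓝 (ρ + r)) := by
  have hcont : Continuous fun μ => ρ + (√(r ^ 2 + (ρ - μ) ^ 2) - (ρ - μ)) := by fun_prop
  have hlim := (hcont.tendsto ρ).mono_left (nhdsWithin_le_nhds (s := Set.Iio ρ))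
  rw [sub_self, zero_pow two_ne_zero, add_zero, Real.sqrt_sq hr, sub_zero] at hlim
  exact hlim.congr' (eventually_nhdsWithin_of_forall fun μ hμ => (realQf_of_lt hμ).symm)

lemma tendsto_realQf_nhdsGT (hr : 0 ≤ r) : Tendsto (realQf ρ r) (𝓝[>] ρ) (𝓝 (ρ - r)) := by
  have hcont : Continuous fun μ => ρ - (√(r ^ 2 + (μ - ρ) ^ 2) - (μ - ρ)) := by fun_prop
  have hlim := (hcont.tendsto ρ).mono_left (nhdsWithin_le_nhds (s := Set.Ioi ρ))
  rw [sub_self, zero_pow two_ne_zero, add_zero, Real.sqrt_sq hr, sub_zero] at hlim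
  exact hlim.congr' (eventually_nhdsWithin_of_forall fun μ hμ => (realQf_of_gt hμ).symm)

lemma tendsto_realQf_atTop : Tendsto (realQf ρ r) atTop (𝓝 ρ) := by
  have hshift : Tendsto (fun μ : ℝ => μ - ρ) atTop atTop := by
    simpa only [id, sub_eq_add_neg] using tendsto_atTop_add_const_right _ (-ρ) tendsto_id
  have hlim := ((tendsto_sqrt_add_sq_sub_atTop (sq_nonneg r)).comp hshift).const_sub ρ
  rw [sub_zero] at hlim
  exact hlim.congr' ((eventually_gt_atTop ρ).mono fun μ hμ => (realQf_of_gt hμ).symm)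

lemma tendsto_realQf_atBot : Tendsto (realQf ρ r) atBot (𝓝 ρ) := by
  have hshift : Tendsto (fun μ : ℝ => ρ - μ) atBot atTop := by
    simpa only [sub_eq_add_neg] using tendsto_atTop_add_const_left _ ρ tendsto_neg_atBot_atTop
  have hlim := ((tendsto_sqrt_add_sq_sub_atTop (sq_nonneg r)).comp hshift).const_add ρ
  rw [add_zero] at hlim
  exact hlim.congr' ((eventually_lt_atBot ρ).mono fun μ hμ => (realQf_of_lt hμ).symm)

end RealQf

section InnerP

variable {n : ℕ} {P : Matrix (Fin n) (Fin n) ℂ}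

lemma innerP_add_left (u v w : Fin n → ℂ) : innerP P (u + v) w = innerP P u w + innerP P v w := by
  simp only [innerP, mulVec_add, dotProduct_add]

lemma innerP_sub_left (u v w : Fin n → ℂ) : innerP P (u - v) w = innerP P u w - innerP P v w := by
  simp only [innerP, mulVec_sub, dotProduct_sub]

lemma innerP_smul_left (c : ℂ) (u w : Fin n → ℂ) : innerP P (c • u) w = c * innerP P u w := by
  simp only [innerP, mulVec_smul, dotProduct_smul, smul_eq_mul]

lemma innerP_add_right (u v w : Fin n → ℂ) : innerP P u (v + w) = innerP P u v + innerP P u w := by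
  simp only [innerP, star_add, add_dotProduct]

lemma innerP_smul_right (c : ℂ) (u w : Fin n → ℂ) : innerP P u (c • w) = star c * innerP P u w := by
  simp only [innerP, star_smul, smul_dotProduct, smul_eq_mul]

lemma star_innerP (hP : P.IsHermitian) (u v : Fin n → ℂ) : star (innerP P u v) = innerP P v u := by
  rw [innerP, star_dotProduct, star_star, star_mulVec, ← dotProduct_mulVec, hP.eq, innerP]

lemma innerP_self_eq (hP : P.PosSemidef) (v : Fin n → ℂ) :
    innerP P v v = ((normP P v ^ 2 : ℝ) : ℂ) := by
  have hnonneg : 0 ≤ innerP P v v := hP.dotProduct_mulVec_nonneg v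
  obtain ⟨hre, him⟩ := Complex.nonneg_iff.1 hnonneg
  rw [normP, Real.sq_sqrt hre]
  exact Complex.ext rfl him.symm

lemma normP_nonneg (v : Fin n → ℂ) : 0 ≤ normP P v :=
  Real.sqrt_nonneg _

lemma normP_pos (hP : P.PosDef) {v : Fin n → ℂ} (hv : v ≠ 0) : 0 < normP P v :=
  Real.sqrt_pos.2 (Complex.pos_iff.1 (hP.dotProduct_mulVec_pos hv)).1

lemma innerP_self_ne_zero (hP : P.PosDef) {v : Fin n → ℂ} (hv : v ≠ 0) : innerP P v v ≠ 0 :=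
  (hP.dotProduct_mulVec_pos hv).ne'

lemma normP_add_smul_sq (hP : P.PosSemidef) {u v : Fin n → ℂ} (horth : innerP P u v = 0)
    (c : ℂ) : normP P (u + c • v) ^ 2 = normP P u ^ 2 + ‖c‖ ^ 2 * normP P v ^ 2 := by
  have horth' : innerP P v u = 0 := by rw [← star_innerP hP.isHermitian, horth, star_zero]
  have hexp : innerP P (u + c • v) (u + c • v)
      = innerP P u u + c * star c * innerP P v v := by
    simp only [innerP_add_left, innerP_add_right, innerP_smul_left, innerP_smul_right, horth,
      horth']
    ring
  apply Complex.ofReal_injective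
  rw [← innerP_self_eq hP, hexp, innerP_self_eq hP, innerP_self_eq hP, Complex.star_def,
    Complex.mul_conj, Complex.normSq_eq_norm_sq]
  push_cast
  ring

end InnerP

section Pencil

variable {n : ℕ} {M N P : Matrix (Fin n) (Fin n) ℂ} {x : Fin n → ℂ}

lemma innerP_sub_rq_smul_eq_zero (hx : innerP P (N *ᵥ x) (N *ᵥ x) ≠ 0) :
    innerP P (M *ᵥ x - rq M N P x • N *ᵥ x) (N *ᵥ x) = 0 := by
  rw [innerP_sub_left, innerP_smul_left, rq, div_mul_cancel₀ _ hx, sub_self]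

lemma sub_smul_mulVec_eq (μ : ℂ) :
    (M - μ • N) *ᵥ x = (M *ᵥ x - rq M N P x • N *ᵥ x) + (rq M N P x - μ) • N *ᵥ x := by
  rw [sub_mulVec, smul_mulVec, sub_smul]
  abel

lemma innerP_sub_smul_mulVec (hx : innerP P (N *ᵥ x) (N *ᵥ x) ≠ 0) (μ : ℂ) :
    innerP P ((M - μ • N) *ᵥ x) (N *ᵥ x) = (rq M N P x - μ) * innerP P (N *ᵥ x) (N *ᵥ x) := by
  rw [sub_smul_mulVec_eq (P := P), innerP_add_left, innerP_sub_rq_smul_eq_zero hx, zero_add,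
    innerP_smul_left]

lemma normP_sub_smul_mulVec_div (hP : P.PosDef) (hx : N *ᵥ x ≠ 0) (μ : ℂ) :
    normP P ((M - μ • N) *ᵥ x) / normP P (N *ᵥ x)
      = √(r0 M N P x ^ 2 + ‖rq M N P x - μ‖ ^ 2) := by
  have hNx := normP_pos hP hx
  have horth := innerP_sub_rq_smul_eq_zero (M := M) (innerP_self_ne_zero hP hx)
  rw [← Real.sqrt_sq (div_nonneg (normP_nonneg _) hNx.le), div_pow, sub_smul_mulVec_eq (P := P),
    normP_add_smul_sq hP.posSemidef horth, r0]
  field_simp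

lemma qf_eq (hP : P.PosDef) (hx : N *ᵥ x ≠ 0) (μ : ℂ) :
    qf M N P x μ = (rq M N P x - μ) / ‖rq M N P x - μ‖
      * √(r0 M N P x ^ 2 + ‖rq M N P x - μ‖ ^ 2) + μ := by
  have hNx : 0 < normP P (N *ᵥ x) ^ 2 := pow_pos (normP_pos hP hx) 2
  rw [qf, innerP_sub_smul_mulVec (innerP_self_ne_zero hP hx), normP_sub_smul_mulVec_div hP hx,
    innerP_self_eq hP.posSemidef, norm_mul, Complex.norm_real, Real.norm_of_nonneg hNx.le]
  push_cast
  rw [mul_div_mul_right _ _ (by exact_mod_cast hNx.ne')]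

lemma rq_im_eq_zero (hP : P.IsHermitian) (hsa : (Nᴴ * P * M).IsHermitian) :
    (rq M N P x).im = 0 := by
  have ha : (innerP P (M *ᵥ x) (N *ᵥ x)).im = 0 := by
    rw [innerP, star_mulVec, ← dotProduct_mulVec, mulVec_mulVec, mulVec_mulVec]
    exact hsa.im_star_dotProduct_mulVec_self x
  have hs : (innerP P (N *ᵥ x) (N *ᵥ x)).im = 0 := hP.im_star_dotProduct_mulVec_self _
  simp [rq, Complex.div_im, ha, hs]

lemma qf_ofReal (hP : P.PosDef) (hsa : (Nᴴ * P * M).IsHermitian) (hx : N *ᵥ x ≠ 0) (μ : ℝ) :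
    qf M N P x μ = realQf (rq M N P x).re (r0 M N P x) μ := by
  obtain ⟨ρ, hρ⟩ : ∃ ρ : ℝ, rq M N P x = ρ :=
    ⟨_, Complex.ext rfl (by rw [Complex.ofReal_im, rq_im_eq_zero hP.isHermitian hsa])⟩
  rw [qf_eq hP hx, hρ, Complex.ofReal_re, ← Complex.ofReal_sub, Complex.norm_real,
    Real.norm_eq_abs, sq_abs, realQf]
  push_cast
  ring

lemma r0_pos (hP : P.PosDef) (hx : N *ᵥ x ≠ 0) (hev : M *ᵥ x ≠ rq M N P x • N *ᵥ x) :
    0 < r0 M N P x :=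
  div_pos (normP_pos hP (sub_ne_zero.2 hev)) (normP_pos hP hx)

end Pencil

theorem stmt_7_general {n : ℕ} (M N P : Matrix (Fin n) (Fin n) ℂ)
    (hP : P.PosDef) (hsa : (Nᴴ * P * M).IsHermitian)
    (x : Fin n → ℂ) (hx : N.mulVec x ≠ 0)
    (hev : M.mulVec x ≠ rq M N P x • N.mulVec x) :
    (rq M N P x).im = 0 ∧
    (∀ μ : ℝ, (μ : ℂ) ≠ rq M N P x → (qf M N P x μ).im = 0) ∧
    StrictMonoOn (fun μ : ℝ => (qf M N P x μ).re) (Set.Iio (rq M N P x).re) ∧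
    StrictMonoOn (fun μ : ℝ => (qf M N P x μ).re) (Set.Ioi (rq M N P x).re) ∧
    Tendsto (fun μ : ℝ => (qf M N P x μ).re) (𝓝[<] (rq M N P x).re)
      (𝓝 ((rq M N P x).re + r0 M N P x)) ∧
    Tendsto (fun μ : ℝ => (qf M N P x μ).re) (𝓝[>] (rq M N P x).re)
      (𝓝 ((rq M N P x).re - r0 M N P x)) ∧
    Tendsto (fun μ : ℝ => (qf M N P x μ).re) atTop (𝓝 ((rq M N P x).re)) ∧
    Tendsto (fun μ : ℝ => (qf M N P x μ).re) atBot (𝓝 ((rq M N P x).re)) := by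
  have hqf := qf_ofReal hP hsa hx
  have hr := r0_pos hP hx hev
  have hre : (fun μ : ℝ => (qf M N P x μ).re) = realQf (rq M N P x).re (r0 M N P x) :=
    funext fun μ => by rw [hqf, Complex.ofReal_re]
  rw [hre]
  exact ⟨rq_im_eq_zero hP.isHermitian hsa, fun μ _ => by rw [hqf, Complex.ofReal_im],
    strictMonoOn_realQf_Iio hr.ne', strictMonoOn_realQf_Ioi hr.ne', tendsto_realQf_nhdsLT hr.le,
    tendsto_realQf_nhdsGT hr.le, tendsto_realQf_atTop, tendsto_realQf_atBot⟩

/-- in the self-adjoint case, the quotient function restricted to the reals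
is real-valued, strictly increasing on both sides of the Rayleigh quotient, with the stated
one-sided limits at the Rayleigh quotient and at `±∞`. -/
theorem stmt_7 {n : ℕ} (hn : 1 ≤ n) (M N P : Matrix (Fin n) (Fin n) ℂ)
    (hP : P.PosDef) (hsa : (Nᴴ * P * M).IsHermitian)
    (x : Fin n → ℂ) (hx : N.mulVec x ≠ 0)
    (hev : M.mulVec x ≠ rq M N P x • N.mulVec x) :
    (rq M N P x).im = 0 ∧
    (∀ μ : ℝ, (μ : ℂ) ≠ rq M N P x → (qf M N P x μ).im = 0) ∧
    StrictMonoOn (fun μ : ℝ => (qf M N P x μ).re) (Set.Iio (rq M N P x).re) ∧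
    StrictMonoOn (fun μ : ℝ => (qf M N P x μ).re) (Set.Ioi (rq M N P x).re) ∧
    Tendsto (fun μ : ℝ => (qf M N P x μ).re) (𝓝[<] (rq M N P x).re)
      (𝓝 ((rq M N P x).re + r0 M N P x)) ∧
    Tendsto (fun μ : ℝ => (qf M N P x μ).re) (𝓝[>] (rq M N P x).re)
      (𝓝 ((rq M N P x).re - r0 M N P x)) ∧
    Tendsto (fun μ : ℝ => (qf M N P x μ).re) atTop (𝓝 ((rq M N P x).re)) ∧
    Tendsto (fun μ : ℝ => (qf M N P x μ).re) atBot (𝓝 ((rq M N P x).re)) :=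
  stmt_7_general M N P hP hsa x hx hev
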